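/- arXiv:1902.06600 — 4 statements merged into one kernel-verified Lean document; each statement's English description precedes it below -/
import Mathlib

section
/- Let P and Q be orthogonal projections on a Hilbert space H. Then the sequence of operators (PQP)^n converges in the strong operator topology (indeed in norm on each vector) to the orthogonal projection onto the intersection of the ranges of P and Q. -/
open Filter ContinuousLinearMap

section Aux

variable {H : Type*} [NormedAddCommGroup H] [InnerProductSpace ℂ H] [CompleteSpace H]

local notation "⟪" x ", " y "⟫" => @inner ℂ _ _ x y

private lemma sa_inner {P : H →L[ℂ] H} (hsa : IsSelfAdjoint P) (u v : H) :
    ⟪P u, v⟫ = ⟪u, P v⟫ := by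
  conv_lhs => rw [← hsa.adjoint_eq]
  exact ContinuousLinearMap.adjoint_inner_left P v u

private lemma proj_norm_le {P : H →L[ℂ] H} (hsa : IsSelfAdjoint P) (hidem : P ∘L P = P)
    (x : H) : ‖P x‖ ≤ ‖x‖ := by
  have hPP : P (P x) = P x := DFunLike.congr_fun hidem x
  have h1 : (‖P x‖ : ℝ) ^ 2 = RCLike.re ⟪x, P x⟫ := by
    rw [← inner_self_eq_norm_sq (𝕜 := ℂ) (P x)]
    congr 1
    rw [sa_inner hsa, hPP]
  have h2 : RCLike.re ⟪x, P x⟫ ≤ ‖x‖ * ‖P x‖ := re_inner_le_norm (𝕜 := ℂ) x (P x)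
  nlinarith [norm_nonneg x, norm_nonneg (P x)]

end Aux

/-- If `P, Q` are orthogonal projections on a complex Hilbert space `H`, then `(PQP)^n ξ`
converges (in norm, hence in the strong operator topology) to the orthogonal projection of
`ξ` onto `ran P ∩ ran Q`. -/
theorem stmt0 {H : Type*} [NormedAddCommGroup H] [InnerProductSpace ℂ H] [CompleteSpace H]
    (P Q : H →L[ℂ] H) (hPsa : IsSelfAdjoint P) (hPidem : P ∘L P = P)
    (hQsa : IsSelfAdjoint Q) (hQidem : Q ∘L Q = Q)
    (K : Submodule ℂ H) (hK : K = LinearMap.range (P : H →ₗ[ℂ] H) ⊓ LinearMap.range (Q : H →ₗ[ℂ] H))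
    [K.HasOrthogonalProjection] :
    ∀ ξ : H, Tendsto (fun n : ℕ => ((P ∘L Q ∘L P) ^ n) ξ) atTop
      (nhds ((K.orthogonalProjectionOnto ξ : H))) := by
  intro ξ
  set T : H →L[ℂ] H := P ∘L Q ∘L P with hT
  have hPP : ∀ y, P (P y) = P y := fun y => DFunLike.congr_fun hPidem y
  have hQQ : ∀ y, Q (Q y) = Q y := fun y => DFunLike.congr_fun hQidem y
  have hTapp : ∀ y, T y = P (Q (P y)) := fun y => rfl
  have hTsa : IsSelfAdjoint T := by
    have := hQsa.conjugate P
    rw [hPsa.star_eq] at this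
    simpa [hT, ContinuousLinearMap.mul_def, mul_assoc, ContinuousLinearMap.comp_assoc] using this
  have hinner : ∀ (n : ℕ) (u v : H),
      @inner ℂ _ _ ((T ^ n) u) v = @inner ℂ _ _ u ((T ^ n) v) :=
    fun n u v => sa_inner (hTsa.pow n) u v
  have hsplit : ∀ n m : ℕ,
      @inner ℂ _ _ ((T ^ n) ξ) ((T ^ m) ξ) = @inner ℂ _ _ ξ ((T ^ (n + m)) ξ) := by
    intro n m
    rw [hinner n ξ, ← ContinuousLinearMap.mul_apply, ← pow_add]
  have hTcontr : ∀ y, ‖T y‖ ≤ ‖y‖ := by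
    intro y
    rw [hTapp]
    exact (proj_norm_le hPsa hPidem _).trans
      ((proj_norm_le hQsa hQidem _).trans (proj_norm_le hPsa hPidem _))
  -- the norms b n = ‖Tⁿ ξ‖
  set b : ℕ → ℝ := fun n => ‖(T ^ n) ξ‖ with hb
  have hb_succ : ∀ n, (T ^ (n + 1)) ξ = T ((T ^ n) ξ) := by
    intro n; rw [pow_succ', ContinuousLinearMap.mul_apply]
  have hb_anti : Antitone b := by
    refine antitone_nat_of_succ_le fun n => ?_
    show ‖(T ^ (n + 1)) ξ‖ ≤ ‖(T ^ n) ξ‖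
    rw [hb_succ]; exact hTcontr _
  have hb_nonneg : ∀ n, 0 ≤ b n := fun n => norm_nonneg _
  set β : ℝ := ⨅ n, b n with hβ
  have hbβ : Tendsto b atTop (nhds β) :=
    tendsto_atTop_ciInf hb_anti ⟨0, by rintro x ⟨n, rfl⟩; exact hb_nonneg n⟩
  -- the diagonal matrix elements a k = re ⟪ξ, Tᵏ ξ⟫
  set a : ℕ → ℝ := fun k => RCLike.re (@inner ℂ _ _ ξ ((T ^ k) ξ)) with ha
  have ha_even : ∀ n : ℕ, a (2 * n) = b n ^ 2 := by
    intro n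
    have : @inner ℂ _ _ ξ ((T ^ (2 * n)) ξ) = @inner ℂ _ _ ((T ^ n) ξ) ((T ^ n) ξ) := by
      rw [hsplit n n, two_mul]
    simp only [ha, this]
    exact inner_self_eq_norm_sq _
  have ha_odd : ∀ n : ℕ, b (n + 1) ^ 2 ≤ a (2 * n + 1) ∧ a (2 * n + 1) ≤ b n ^ 2 := by
    intro n
    set y : H := (T ^ n) ξ with hy
    have h1 : @inner ℂ _ _ ξ ((T ^ (2 * n + 1)) ξ) = @inner ℂ _ _ y (T y) := by
      rw [← hb_succ, hsplit n (n + 1)]; ring_nf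
    have h2 : @inner ℂ _ _ y (T y) = @inner ℂ _ _ (Q (P y)) (Q (P y)) := by
      rw [hTapp, ← sa_inner hPsa]
      conv_lhs => rw [← hQQ (P y)]
      rw [← sa_inner hQsa]
    have h3 : a (2 * n + 1) = ‖Q (P y)‖ ^ 2 := by
      simp only [ha, h1, h2]
      exact inner_self_eq_norm_sq _
    constructor
    · rw [h3]
      have : b (n + 1) ≤ ‖Q (P y)‖ := by
        show ‖(T ^ (n + 1)) ξ‖ ≤ _
        rw [hb_succ, hTapp]
        exact proj_norm_le hPsa hPidem _
      exact pow_le_pow_left₀ (hb_nonneg _) this 2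
    · rw [h3]
      have : ‖Q (P y)‖ ≤ b n := by
        exact (proj_norm_le hQsa hQidem _).trans (proj_norm_le hPsa hPidem _)
      exact pow_le_pow_left₀ (norm_nonneg _) this 2
  have hbound : ∀ k : ℕ, b ((k + 1) / 2) ^ 2 ≤ a k ∧ a k ≤ b (k / 2) ^ 2 := by
    intro k
    rcases Nat.even_or_odd k with ⟨n, hn⟩ | ⟨n, hn⟩
    · have hk : k = 2 * n := by omega
      subst hk
      have h1 : (2 * n + 1) / 2 = n := by omega
      have h2 : 2 * n / 2 = n := by omega
      rw [h1, h2, ha_even n]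
      exact ⟨le_rfl, le_rfl⟩
    · have hk : k = 2 * n + 1 := by omega
      subst hk
      have h1 : (2 * n + 1 + 1) / 2 = n + 1 := by omega
      have h2 : (2 * n + 1) / 2 = n := by omega
      rw [h1, h2]
      exact ha_odd n
  have hb2 : Tendsto (fun n => b n ^ 2) atTop (nhds (β ^ 2)) := hbβ.pow 2
  have hdiv : Tendsto (fun k : ℕ => k / 2) atTop atTop :=
    tendsto_atTop_atTop.2 fun n => ⟨2 * n, fun m hm => by omega⟩
  have hdiv' : Tendsto (fun k : ℕ => (k + 1) / 2) atTop atTop :=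
    tendsto_atTop_atTop.2 fun n => ⟨2 * n, fun m hm => by omega⟩
  have ha_tendsto : Tendsto a atTop (nhds (β ^ 2)) :=
    tendsto_of_tendsto_of_tendsto_of_le_of_le (hb2.comp hdiv') (hb2.comp hdiv)
      (fun k => (hbound k).1) (fun k => (hbound k).2)
  -- Cauchy
  have hcauchy : CauchySeq (fun n : ℕ => (T ^ n) ξ) := by
    rw [Metric.cauchySeq_iff]
    intro ε hε
    have hε4 : (0 : ℝ) < ε ^ 2 / 4 := by positivity
    obtain ⟨N, hN⟩ := (Metric.tendsto_atTop.1 ha_tendsto) (ε ^ 2 / 4) hε4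
    refine ⟨N, fun m hm n hn => ?_⟩
    have key : dist ((T ^ m) ξ) ((T ^ n) ξ) ^ 2 = a (2 * m) - 2 * a (m + n) + a (2 * n) := by
      rw [dist_eq_norm, norm_sub_sq (𝕜 := ℂ)]
      have h1 : RCLike.re (@inner ℂ _ _ ((T ^ m) ξ) ((T ^ n) ξ)) = a (m + n) := by
        rw [hsplit]
      rw [h1, ← ha_even m, ← ha_even n]
    have e1 : |a (2 * m) - β ^ 2| < ε ^ 2 / 4 := by
      simpa [Real.dist_eq] using hN (2 * m) (by omega)
    have e2 : |a (m + n) - β ^ 2| < ε ^ 2 / 4 := by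
      simpa [Real.dist_eq] using hN (m + n) (by omega)
    have e3 : |a (2 * n) - β ^ 2| < ε ^ 2 / 4 := by
      simpa [Real.dist_eq] using hN (2 * n) (by omega)
    have hd : dist ((T ^ m) ξ) ((T ^ n) ξ) ^ 2 < ε ^ 2 := by
      rw [key]
      have := abs_lt.1 e1
      have := abs_lt.1 e2
      have := abs_lt.1 e3
      linarith
    exact lt_of_pow_lt_pow_left₀ 2 (le_of_lt hε) hd
  obtain ⟨L, hL⟩ := cauchySeq_tendsto_of_complete hcauchy
  -- identify the limit
  have hTL : T L = L := by
    have h1 : Tendsto (fun n : ℕ => T ((T ^ n) ξ)) atTop (nhds (T L)) :=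
      (T.continuous.tendsto L).comp hL
    have h2 : Tendsto (fun n : ℕ => T ((T ^ n) ξ)) atTop (nhds L) := by
      have := hL.comp (tendsto_add_atTop_nat 1)
      simpa only [Function.comp_def, hb_succ] using this
    exact tendsto_nhds_unique h1 h2
  have hPL : P L = L := by
    calc P L = P (T L) := by rw [hTL]
      _ = P (Q (P L)) := hPP _
      _ = T L := rfl
      _ = L := hTL
  have hQL : Q L = L := by
    have h1 : RCLike.re (@inner ℂ _ _ L (Q L)) = ‖Q L‖ ^ 2 := by
      have : @inner ℂ _ _ L (Q L) = @inner ℂ _ _ (Q L) (Q L) := by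
        conv_lhs => rw [← hQQ L]
        rw [← sa_inner hQsa]
      rw [this]; exact inner_self_eq_norm_sq _
    have h2 : (‖L‖ : ℝ) ^ 2 = ‖Q L‖ ^ 2 := by
      have : @inner ℂ _ _ L L = @inner ℂ _ _ L (Q L) := by
        calc @inner ℂ _ _ L L = @inner ℂ _ _ L (T L) := by rw [hTL]
          _ = @inner ℂ _ _ (P L) (Q (P L)) := by rw [hTapp, ← sa_inner hPsa]
          _ = @inner ℂ _ _ L (Q L) := by rw [hPL]
      rw [← inner_self_eq_norm_sq (𝕜 := ℂ) L, this, h1]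
    have h3 : ‖L - Q L‖ ^ 2 = 0 := by
      rw [norm_sub_sq (𝕜 := ℂ), h1, h2]; ring
    have h4 : L - Q L = 0 := by
      have := pow_eq_zero_iff (n := 2) (by norm_num) |>.1 h3
      exact norm_eq_zero.1 this
    exact (sub_eq_zero.1 h4).symm
  have hLK : L ∈ K := by
    rw [hK]
    exact ⟨LinearMap.mem_range.2 ⟨L, hPL⟩, LinearMap.mem_range.2 ⟨L, hQL⟩⟩
  have horth : ξ - L ∈ Kᗮ := by
    rw [Submodule.mem_orthogonal]
    intro z hz
    rw [hK, Submodule.mem_inf] at hz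
    obtain ⟨⟨w1, hw1⟩, ⟨w2, hw2⟩⟩ := hz
    have hPz : P z = z := by rw [← hw1]; exact hPP w1
    have hQz : Q z = z := by rw [← hw2]; exact hQQ w2
    have hTz : T z = z := by rw [hTapp, hPz, hQz, hPz]
    have hTnz : ∀ n : ℕ, (T ^ n) z = z := by
      intro n
      induction n with
      | zero => simp
      | succ k ih => rw [pow_succ', ContinuousLinearMap.mul_apply, ih, hTz]
    have hconst : ∀ n : ℕ, @inner ℂ _ _ z ((T ^ n) ξ) = @inner ℂ _ _ z ξ := by
      intro n
      rw [← hinner n z ξ, hTnz n]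
    have h1 : Tendsto (fun n : ℕ => @inner ℂ _ _ z ((T ^ n) ξ)) atTop
        (nhds (@inner ℂ _ _ z L)) := (tendsto_const_nhds.inner hL)
    have h2 : @inner ℂ _ _ z L = @inner ℂ _ _ z ξ := by
      refine tendsto_nhds_unique h1 ?_
      simpa only [hconst] using (tendsto_const_nhds : Tendsto (fun _ : ℕ => @inner ℂ _ _ z ξ) atTop _)
    rw [inner_sub_right, h2, sub_self]
  have heq : (K.orthogonalProjectionOnto ξ : H) = L := by
    rw [← Submodule.starProjection_apply]
    exact Submodule.eq_starProjection_of_mem_orthogonal hLK horth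
  rw [heq]
  exact hL
end

section
/- Let f : ℝ^k → ℂ with f(t) = 1 + ⟨F(t)t, t⟩ for a continuous F : ℝ^k → M_k(ℂ), and let J be a countable set. Then the map Φ : ℓ²(J, ℝ^k) → ℂ defined by Φ(ξ) = ∏_{j∈J} f(ξ(j)) is continuous with respect to the ℓ²-norm topology. -/
open Finset Filter Topology Real
open scoped ENNReal NNReal

lemma aux_norm_prod_le (a : ι → ℂ) (S : Finset ι) :
    ‖∏ j ∈ S, (1 + a j)‖ ≤ Real.exp (∑ j ∈ S, ‖a j‖) := by
  rw [norm_prod, Real.exp_sum]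
  refine Finset.prod_le_prod (fun j _ => norm_nonneg _) (fun j _ => ?_)
  calc ‖1 + a j‖ ≤ 1 + ‖a j‖ := by simpa using norm_add_le 1 (a j)
    _ ≤ Real.exp ‖a j‖ := by simpa [add_comm] using Real.add_one_le_exp ‖a j‖

lemma aux_prod_sub_one (a : ι → ℂ) (S : Finset ι) :
    ‖(∏ j ∈ S, (1 + a j)) - 1‖ ≤ Real.exp (∑ j ∈ S, ‖a j‖) - 1 := by
  classical
  induction S using Finset.induction_on with
  | empty => simp
  | insert i S hx ih =>
    rw [Finset.prod_insert hx, Finset.sum_insert hx]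
    have h1 : (1 + a i) * ∏ j ∈ S, (1 + a j) - 1
        = ((∏ j ∈ S, (1 + a j)) - 1) + a i * ∏ j ∈ S, (1 + a j) := by ring
    rw [h1]
    have h2 := aux_norm_prod_le a S
    have h3 : ‖a i * ∏ j ∈ S, (1 + a j)‖ ≤ ‖a i‖ * Real.exp (∑ j ∈ S, ‖a j‖) := by
      rw [norm_mul]; exact mul_le_mul_of_nonneg_left h2 (norm_nonneg _)
    refine (norm_add_le _ _).trans ((add_le_add ih h3).trans ?_)
    rw [Real.exp_add]
    nlinarith [Real.add_one_le_exp ‖a i‖, Real.exp_pos (∑ j ∈ S, ‖a j‖), norm_nonneg (a i)]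

lemma aux_sdiff_sum_le [DecidableEq ι] (a : ι → ℂ) (h : Summable fun j => ‖a j‖) (S T : Finset ι) :
    ∑ j ∈ T \ S, ‖a j‖ ≤ ∑' j : {j // j ∉ S}, ‖a j‖ := by
  classical
  have hrw : (∑' (j : {j // j ∉ S}), ‖a (j:ι)‖)
      = ∑' j, ({j | j ∉ S} : Set ι).indicator (fun j => ‖a j‖) j :=
    _root_.tsum_subtype {j | j ∉ S} (fun j => ‖a j‖)
  rw [hrw]
  calc ∑ j ∈ T \ S, ‖a j‖ = ∑ j ∈ T \ S, ({j | j ∉ S} : Set ι).indicator (fun j => ‖a j‖) j := by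
        refine Finset.sum_congr rfl fun j hj => ?_
        rw [Set.indicator_of_mem]
        exact (Finset.mem_sdiff.1 hj).2
    _ ≤ ∑' j, ({j | j ∉ S} : Set ι).indicator (fun j => ‖a j‖) j := by
        refine Summable.sum_le_tsum _ (fun j _ => Set.indicator_nonneg (fun _ _ => norm_nonneg _) _) ?_
        exact h.indicator _

lemma aux_prod_diff [DecidableEq ι] (a : ι → ℂ) {S T : Finset ι} (hST : S ⊆ T) :
    ‖(∏ j ∈ T, (1 + a j)) - ∏ j ∈ S, (1 + a j)‖
      ≤ Real.exp (∑ j ∈ S, ‖a j‖) * (Real.exp (∑ j ∈ T \ S, ‖a j‖) - 1) := by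
  classical
  have h1 : ∏ j ∈ T, (1 + a j) = (∏ j ∈ S, (1 + a j)) * ∏ j ∈ T \ S, (1 + a j) := by
    rw [← Finset.prod_sdiff hST]; ring
  rw [h1, ← mul_sub_one, norm_mul]
  exact mul_le_mul (aux_norm_prod_le a S) (aux_prod_sub_one a _) (norm_nonneg _)
    (Real.exp_pos _).le

lemma aux_multipliable (a : ι → ℂ) (h : Summable fun j => ‖a j‖) :
    Multipliable (fun j => 1 + a j) := by
  classical
  have hcauchy : CauchySeq (fun S : Finset ι => ∏ j ∈ S, (1 + a j)) := by
    rw [Metric.cauchySeq_iff']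
    intro ε hε
    set c := ∑' j, ‖a j‖ with hc
    have hcpos : 0 < Real.exp c := Real.exp_pos _
    set δ := Real.log (1 + ε / Real.exp c) with hδ
    have hδpos : 0 < 1 + ε / Real.exp c := by positivity
    have hexpδ : Real.exp δ - 1 = ε / Real.exp c := by rw [hδ, Real.exp_log hδpos]; ring
    have hδ0 : 0 < δ := Real.log_pos (by nlinarith [div_pos hε hcpos])
    obtain ⟨N, hN⟩ := ((tendsto_order.1 (tendsto_tsum_compl_atTop_zero
      (fun j => ‖a j‖))).2 δ hδ0).exists
    refine ⟨N, fun n hn => ?_⟩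
    rw [dist_eq_norm]
    have h2 := aux_prod_diff a hn
    have h3 : ∑ j ∈ n \ N, ‖a j‖ < δ := lt_of_le_of_lt (aux_sdiff_sum_le a h N n) hN
    have h4 : ∑ j ∈ N, ‖a j‖ ≤ c := Summable.sum_le_tsum _ (fun j _ => norm_nonneg _) h
    calc ‖(∏ j ∈ n, (1 + a j)) - ∏ j ∈ N, (1 + a j)‖
        ≤ Real.exp (∑ j ∈ N, ‖a j‖) * (Real.exp (∑ j ∈ n \ N, ‖a j‖) - 1) := h2
      _ < Real.exp c * (Real.exp δ - 1) := by
          have e1 : Real.exp (∑ j ∈ N, ‖a j‖) ≤ Real.exp c := Real.exp_le_exp.2 h4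
          have e2 : Real.exp (∑ j ∈ n \ N, ‖a j‖) - 1 < Real.exp δ - 1 := by
            have := Real.exp_lt_exp.2 h3; linarith
          have e3 : 0 ≤ Real.exp (∑ j ∈ n \ N, ‖a j‖) - 1 := by
            have : (1:ℝ) ≤ Real.exp (∑ j ∈ n \ N, ‖a j‖) :=
              Real.one_le_exp (Finset.sum_nonneg fun j _ => norm_nonneg _)
            linarith
          calc Real.exp (∑ j ∈ N, ‖a j‖) * (Real.exp (∑ j ∈ n \ N, ‖a j‖) - 1)
              ≤ Real.exp c * (Real.exp (∑ j ∈ n \ N, ‖a j‖) - 1) :=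
                mul_le_mul_of_nonneg_right e1 e3
            _ < Real.exp c * (Real.exp δ - 1) := by
                exact (mul_lt_mul_iff_right₀ hcpos).2 e2
      _ = ε := by rw [hexpδ]; field_simp
  obtain ⟨x, hx⟩ := cauchySeq_tendsto_of_complete hcauchy
  exact ⟨x, hx⟩

lemma aux_tprod_sub_prod (a : ι → ℂ) (h : Summable fun j => ‖a j‖) (S : Finset ι) :
    ‖(∏' j, (1 + a j)) - ∏ j ∈ S, (1 + a j)‖
      ≤ Real.exp (∑' j, ‖a j‖) * (Real.exp (∑' j : {j // j ∉ S}, ‖a j‖) - 1) := by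
  classical
  have hm := aux_multipliable a h
  have htend : Tendsto (fun T : Finset ι => ‖(∏ j ∈ T, (1 + a j)) - ∏ j ∈ S, (1 + a j)‖)
      atTop (𝓝 ‖(∏' j, (1 + a j)) - ∏ j ∈ S, (1 + a j)‖) :=
    ((hm.hasProd.sub tendsto_const_nhds).norm)
  refine le_of_tendsto htend ?_
  filter_upwards [Filter.eventually_ge_atTop S] with T hT
  refine (aux_prod_diff a hT).trans ?_
  have h1 : ∑ j ∈ S, ‖a j‖ ≤ ∑' j, ‖a j‖ := Summable.sum_le_tsum _ (fun j _ => norm_nonneg _) h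
  have h2 : ∑ j ∈ T \ S, ‖a j‖ ≤ ∑' j : {j // j ∉ S}, ‖a j‖ := aux_sdiff_sum_le a h S T
  have h3 : (0:ℝ) ≤ Real.exp (∑ j ∈ T \ S, ‖a j‖) - 1 := by
    have : (1:ℝ) ≤ Real.exp (∑ j ∈ T \ S, ‖a j‖) :=
      Real.one_le_exp (Finset.sum_nonneg fun j _ => norm_nonneg _)
    linarith
  refine mul_le_mul (Real.exp_le_exp.2 h1) ?_ h3 (Real.exp_pos _).le
  have := Real.exp_le_exp.2 h2
  linarith


/-- If `f : ℝ^k → ℂ` has the form `f t = 1 + ⟨F(t) t, t⟩` with `F : ℝ^k → M_k(ℂ)` continuous,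
and `J` is a countable set, then `Φ : ℓ²(J, ℝ^k) → ℂ`, `Φ(ξ) = ∏_j f(ξ(j))`, is continuous
in the `ℓ²`-norm topology. -/
theorem stmt6 {k : ℕ} {J : Type*} [Countable J]
    (F : EuclideanSpace ℝ (Fin k) → Matrix (Fin k) (Fin k) ℂ) (hF : Continuous F)
    (f : EuclideanSpace ℝ (Fin k) → ℂ)
    (hf : ∀ t, f t = 1 + ∑ i, (∑ j, F t i j * (t j : ℂ)) * (t i : ℂ)) :
    Continuous fun ξ : lp (fun _ : J => EuclideanSpace ℝ (Fin k)) 2 => ∏' j, f (ξ j) := by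
  classical
  -- coordinate bound on Euclidean space
  have hcoord : ∀ (t : EuclideanSpace ℝ (Fin k)) (i : Fin k), ‖t i‖ ≤ ‖t‖ := by
    intro t i
    rw [EuclideanSpace.norm_eq t]
    rw [show ‖t i‖ = |t i| from rfl]
    refine (Real.le_sqrt (abs_nonneg _) ?_).2 ?_
    · exact Finset.sum_nonneg fun j _ => by positivity
    · calc |t i| ^ 2 = ‖t i‖ ^ 2 := by rw [Real.norm_eq_abs]
        _ ≤ ∑ j, ‖t j‖ ^ 2 := Finset.single_le_sum (f := fun j => ‖t j‖ ^ 2)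
            (fun j _ => by positivity) (Finset.mem_univ i)
  -- continuity of f
  have hfc : Continuous f := by
    have hform : Continuous fun t : EuclideanSpace ℝ (Fin k) =>
        (1 : ℂ) + ∑ i, (∑ j, F t i j * (t j : ℂ)) * (t i : ℂ) := by
      refine continuous_const.add (continuous_finset_sum _ fun i _ => ?_)
      refine Continuous.mul (continuous_finset_sum _ fun j _ => ?_) ?_
      · exact (((continuous_apply j).comp ((continuous_apply i).comp hF)).mul
          (Complex.continuous_ofReal.comp (EuclideanSpace.proj j).continuous))
      · exact Complex.continuous_ofReal.comp (EuclideanSpace.proj i).continuous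
    exact hform.congr fun t => (hf t).symm
  -- pointwise quadratic bound
  have hbound : ∀ t, ‖f t - 1‖ ≤ (∑ i, ∑ j, ‖F t i j‖) * ‖t‖ ^ 2 := by
    intro t
    rw [hf t, add_sub_cancel_left]
    calc ‖∑ i, (∑ j, F t i j * (t j : ℂ)) * (t i : ℂ)‖
        ≤ ∑ i, ‖(∑ j, F t i j * (t j : ℂ)) * (t i : ℂ)‖ := norm_sum_le _ _
      _ ≤ ∑ i, (∑ j, ‖F t i j‖ * ‖t‖) * ‖t‖ := by
          refine Finset.sum_le_sum fun i _ => ?_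
          rw [norm_mul]
          refine mul_le_mul ?_ ?_ (norm_nonneg _) ?_
          · refine (norm_sum_le _ _).trans (Finset.sum_le_sum fun j _ => ?_)
            rw [norm_mul, Complex.norm_real]
            exact mul_le_mul_of_nonneg_left (hcoord t j) (norm_nonneg _)
          · rw [Complex.norm_real]; exact hcoord t i
          · exact Finset.sum_nonneg fun j _ => by positivity
      _ = (∑ i, ∑ j, ‖F t i j‖) * ‖t‖ ^ 2 := by
          simp_rw [← Finset.sum_mul]
          ring
  -- continuity of coefficient-sum
  have hC : Continuous fun t : EuclideanSpace ℝ (Fin k) => ∑ i, ∑ j, ‖F t i j‖ :=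
    continuous_finset_sum _ fun i _ => continuous_finset_sum _ fun j _ =>
      ((continuous_apply j).comp ((continuous_apply i).comp hF)).norm
  -- evaluation maps on lp are continuous
  have heval : ∀ j : J, Continuous
      fun ξ' : lp (fun _ : J => EuclideanSpace ℝ (Fin k)) 2 => ξ' j := by
    intro j
    have hl : LipschitzWith 1
        (fun ξ' : lp (fun _ : J => EuclideanSpace ℝ (Fin k)) 2 => ξ' j) := by
      refine LipschitzWith.of_dist_le_mul fun ξ' η' => ?_
      rw [NNReal.coe_one, one_mul, dist_eq_norm, dist_eq_norm]
      have h := lp.norm_apply_le_norm (by norm_num : (2 : ℝ≥0∞) ≠ 0) (ξ' - η') j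
      rwa [lp.coeFn_sub, Pi.sub_apply] at h
    exact hl.continuous
  -- square-summability facts
  have htwo : (0 : ℝ) < (2 : ℝ≥0∞).toReal := by norm_num
  have hsumsq : ∀ ζ : lp (fun _ : J => EuclideanSpace ℝ (Fin k)) 2,
      Summable fun j => ‖ζ j‖ ^ 2 := by
    intro ζ
    have h := (memℓp_gen_iff htwo).1 (lp.memℓp ζ)
    have h2 : ∀ j : J, ‖ζ j‖ ^ (2 : ℝ≥0∞).toReal = ‖ζ j‖ ^ 2 := by
      intro j
      rw [show (2 : ℝ≥0∞).toReal = ((2 : ℕ) : ℝ) by norm_num, Real.rpow_natCast]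
    simpa [h2] using h
  have hnormsq : ∀ ζ : lp (fun _ : J => EuclideanSpace ℝ (Fin k)) 2,
      (∑' j, ‖ζ j‖ ^ 2) = ‖ζ‖ ^ 2 := by
    intro ζ
    have h := lp.norm_rpow_eq_tsum htwo ζ
    have h2 : ∀ x : ℝ, x ^ (2 : ℝ≥0∞).toReal = x ^ 2 := by
      intro x
      rw [show (2 : ℝ≥0∞).toReal = ((2 : ℕ) : ℝ) by norm_num, Real.rpow_natCast]
    rw [h2] at h
    simp_rw [h2] at h
    exact h.symm
  rw [Metric.continuous_iff]
  intro ξ₀ ε hε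
  set R : ℝ := ‖ξ₀‖ + 1 with hR
  have hR1 : 1 ≤ R := by have := norm_nonneg ξ₀; simp only [hR]; linarith
  -- uniform coefficient bound M on the ball of radius R
  obtain ⟨t₀, ht₀, hmax⟩ := (isCompact_closedBall (0 : EuclideanSpace ℝ (Fin k)) R).exists_isMaxOn
    ⟨0, Metric.mem_closedBall_self (by linarith)⟩ hC.continuousOn
  set M : ℝ := max 1 (∑ i, ∑ j, ‖F t₀ i j‖) with hM
  have hM1 : 1 ≤ M := le_max_left _ _
  have hM0 : 0 < M := by linarith
  have hMb : ∀ t : EuclideanSpace ℝ (Fin k), ‖t‖ ≤ R → (∑ i, ∑ j, ‖F t i j‖) ≤ M := by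
    intro t ht
    exact le_trans (hmax (Metric.mem_closedBall.2 (by simpa using ht))) (le_max_right _ _)
  -- bounds on the coefficients a ξ j = f (ξ j) - 1
  have hAle : ∀ ξ : lp (fun _ : J => EuclideanSpace ℝ (Fin k)) 2, ‖ξ - ξ₀‖ ≤ 1 →
      ∀ j, ‖f (ξ j) - 1‖ ≤ M * ‖ξ j‖ ^ 2 := by
    intro ξ hξ j
    have h1 : ‖ξ j‖ ≤ ‖ξ‖ := lp.norm_apply_le_norm (by norm_num : (2 : ℝ≥0∞) ≠ 0) ξ j
    have h2 : ‖ξ‖ ≤ R := by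
      have h3 : ‖ξ‖ - ‖ξ₀‖ ≤ ‖ξ - ξ₀‖ := norm_sub_norm_le ξ ξ₀
      simp only [hR]; linarith
    exact (hbound (ξ j)).trans
      (mul_le_mul_of_nonneg_right (hMb _ (h1.trans h2)) (by positivity))
  have hsummA : ∀ ξ : lp (fun _ : J => EuclideanSpace ℝ (Fin k)) 2, ‖ξ - ξ₀‖ ≤ 1 →
      Summable fun j => ‖f (ξ j) - 1‖ := by
    intro ξ hξ
    exact Summable.of_nonneg_of_le (fun j => norm_nonneg _) (hAle ξ hξ)
      ((hsumsq ξ).mul_left M)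
  have hcB : ∀ ξ : lp (fun _ : J => EuclideanSpace ℝ (Fin k)) 2, ‖ξ - ξ₀‖ ≤ 1 →
      (∑' j, ‖f (ξ j) - 1‖) ≤ M * R ^ 2 := by
    intro ξ hξ
    have h1 : (∑' j, ‖f (ξ j) - 1‖) ≤ ∑' j, M * ‖ξ j‖ ^ 2 :=
      Summable.tsum_le_tsum (hAle ξ hξ) (hsummA ξ hξ) ((hsumsq ξ).mul_left M)
    rw [tsum_mul_left, hnormsq ξ] at h1
    refine h1.trans ?_
    have h2 : ‖ξ‖ ≤ R := by
      have h3 : ‖ξ‖ - ‖ξ₀‖ ≤ ‖ξ - ξ₀‖ := norm_sub_norm_le ξ ξ₀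
      simp only [hR]; linarith
    exact mul_le_mul_of_nonneg_left (pow_le_pow_left₀ (norm_nonneg ξ) h2 2) hM0.le
  -- tail estimate
  have htail : ∀ (S : Finset J) (ξ : lp (fun _ : J => EuclideanSpace ℝ (Fin k)) 2),
      ‖ξ - ξ₀‖ ≤ 1 →
      (∑' j : {j // j ∉ S}, ‖f (ξ j) - 1‖)
        ≤ M * (2 * (∑' j : {j // j ∉ S}, ‖ξ₀ j‖ ^ 2) + 2 * ‖ξ - ξ₀‖ ^ 2) := by
    intro S ξ hξ
    have hptw : ∀ j : J, ‖ξ j‖ ^ 2 ≤ 2 * ‖ξ₀ j‖ ^ 2 + 2 * ‖(ξ - ξ₀) j‖ ^ 2 := by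
      intro j
      have he : (ξ : ∀ _ : J, EuclideanSpace ℝ (Fin k)) j
          = ξ₀ j + ((ξ - ξ₀ : lp (fun _ : J => EuclideanSpace ℝ (Fin k)) 2) : ∀ _ : J, _) j := by
        rw [lp.coeFn_sub, Pi.sub_apply]; abel
      have h1 : ‖ξ j‖ ≤ ‖ξ₀ j‖ + ‖(ξ - ξ₀) j‖ := by
        rw [he]; exact norm_add_le _ _
      nlinarith [norm_nonneg ((ξ : ∀ _ : J, EuclideanSpace ℝ (Fin k)) j),
        norm_nonneg ((ξ₀ : ∀ _ : J, EuclideanSpace ℝ (Fin k)) j),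
        norm_nonneg (((ξ - ξ₀ : lp (fun _ : J => EuclideanSpace ℝ (Fin k)) 2) :
          ∀ _ : J, EuclideanSpace ℝ (Fin k)) j),
        sq_nonneg (‖ξ₀ j‖ - ‖(ξ - ξ₀) j‖)]
    have hsum2 : Summable fun j : J => M * (2 * ‖ξ₀ j‖ ^ 2 + 2 * ‖(ξ - ξ₀) j‖ ^ 2) :=
      (((hsumsq ξ₀).mul_left 2).add ((hsumsq (ξ - ξ₀)).mul_left 2)).mul_left M
    calc (∑' j : {j // j ∉ S}, ‖f (ξ j) - 1‖)
        ≤ ∑' j : {j // j ∉ S}, M * (2 * ‖ξ₀ (j : J)‖ ^ 2 + 2 * ‖(ξ - ξ₀) (j : J)‖ ^ 2) := by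
          refine Summable.tsum_le_tsum (fun j => ?_) ((hsummA ξ hξ).subtype _) (hsum2.subtype _)
          refine (hAle ξ hξ (j : J)).trans ?_
          exact mul_le_mul_of_nonneg_left (hptw (j : J)) hM0.le
      _ = M * (2 * (∑' j : {j // j ∉ S}, ‖ξ₀ (j : J)‖ ^ 2)
            + 2 * (∑' j : {j // j ∉ S}, ‖(ξ - ξ₀) (j : J)‖ ^ 2)) := by
          rw [tsum_mul_left]
          congr 1
          rw [← tsum_mul_left, ← tsum_mul_left]
          exact Summable.tsum_add (((hsumsq ξ₀).mul_left 2).subtype _)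
            (((hsumsq (ξ - ξ₀)).mul_left 2).subtype _)
      _ ≤ M * (2 * (∑' j : {j // j ∉ S}, ‖ξ₀ (j : J)‖ ^ 2) + 2 * ‖ξ - ξ₀‖ ^ 2) := by
          refine mul_le_mul_of_nonneg_left ?_ hM0.le
          have hle : (∑' j : {j // j ∉ S}, ‖(ξ - ξ₀) (j : J)‖ ^ 2)
              ≤ ∑' j : J, ‖(ξ - ξ₀) j‖ ^ 2 :=
            Summable.tsum_subtype_le (fun j : J => ‖(ξ - ξ₀) j‖ ^ 2) _
              (fun j => by positivity) (hsumsq (ξ - ξ₀))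
          rw [hnormsq (ξ - ξ₀)] at hle
          linarith
  -- choice of η
  set c : ℝ := Real.exp (M * R ^ 2) with hc
  have hcpos : 0 < c := Real.exp_pos _
  set η : ℝ := min 1 (ε / (3 * c * Real.exp 1 + 1)) with hη
  have hηpos : 0 < η := lt_min one_pos (by positivity)
  have hη1 : η ≤ 1 := min_le_left _ _
  have hkey : ∀ τ : ℝ, 0 ≤ τ → τ ≤ η → c * (Real.exp τ - 1) < ε / 3 := by
    intro τ hτ0 hτη
    have hτ1 : τ ≤ 1 := hτη.trans hη1
    have he1 : (0:ℝ) < Real.exp 1 := Real.exp_pos 1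
    have h0 : Real.exp τ * (1 - τ) ≤ 1 := by
      have h := mul_le_mul_of_nonneg_left (Real.add_one_le_exp (-τ)) (Real.exp_pos τ).le
      rw [← Real.exp_add] at h
      simp only [add_neg_cancel, Real.exp_zero] at h
      nlinarith [h]
    have hτe : Real.exp τ ≤ Real.exp 1 := Real.exp_le_exp.2 hτ1
    have h1 : Real.exp τ - 1 ≤ τ * Real.exp 1 := by nlinarith [Real.exp_pos τ]
    have h2 : η ≤ ε / (3 * c * Real.exp 1 + 1) := min_le_right _ _
    have h3 : c * (Real.exp τ - 1) ≤ c * Real.exp 1 * η := by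
      have h3' : τ * Real.exp 1 ≤ η * Real.exp 1 := mul_le_mul_of_nonneg_right hτη he1.le
      calc c * (Real.exp τ - 1) ≤ c * (η * Real.exp 1) :=
            mul_le_mul_of_nonneg_left (h1.trans h3') hcpos.le
        _ = c * Real.exp 1 * η := by ring
    have h4 : η * (3 * c * Real.exp 1 + 1) ≤ ε := (le_div_iff₀ (by positivity)).1 h2
    nlinarith [h3, h4, hηpos]
  -- choose the finite set S
  obtain ⟨S, hS⟩ := ((tendsto_order.1 (tendsto_tsum_compl_atTop_zero
      (fun j : J => ‖ξ₀ j‖ ^ 2))).2 (η / (4 * M)) (div_pos hηpos (by linarith))).exists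
  -- continuity of the finite partial product
  have hPcont : Continuous fun ζ : lp (fun _ : J => EuclideanSpace ℝ (Fin k)) 2 =>
      ∏ j ∈ S, f (ζ j) := continuous_finset_prod _ fun j _ => hfc.comp (heval j)
  obtain ⟨δ₂, hδ₂pos, hδ₂⟩ := Metric.continuous_iff.1 hPcont ξ₀ (ε / 3) (by linarith)
  refine ⟨min δ₂ (min 1 (Real.sqrt (η / (4 * M)))), ?_, ?_⟩
  · have hsq : 0 < Real.sqrt (η / (4 * M)) := Real.sqrt_pos.2 (div_pos hηpos (by linarith))
    exact lt_min hδ₂pos (lt_min one_pos hsq)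
  intro ξ hξδ
  have hd2 : dist ξ ξ₀ < δ₂ := hξδ.trans_le (min_le_left _ _)
  have hd1 : ‖ξ - ξ₀‖ ≤ 1 := by
    rw [← dist_eq_norm]
    exact (hξδ.trans_le ((min_le_right _ _).trans (min_le_left _ _))).le
  have hdsq : ‖ξ - ξ₀‖ ^ 2 ≤ η / (4 * M) := by
    have h1 : ‖ξ - ξ₀‖ ≤ Real.sqrt (η / (4 * M)) := by
      rw [← dist_eq_norm]
      exact (hξδ.trans_le ((min_le_right _ _).trans (min_le_right _ _))).le
    have h2 := Real.sq_sqrt (le_of_lt (div_pos hηpos (by linarith : (0:ℝ) < 4 * M)))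
    nlinarith [norm_nonneg (ξ - ξ₀), Real.sqrt_nonneg (η / (4 * M))]
  -- tail sums are at most η
  have hτ : ∀ ξ' : lp (fun _ : J => EuclideanSpace ℝ (Fin k)) 2, ‖ξ' - ξ₀‖ ≤ 1 →
      ‖ξ' - ξ₀‖ ^ 2 ≤ η / (4 * M) →
      (∑' j : {j // j ∉ S}, ‖f (ξ' j) - 1‖) ≤ η := by
    intro ξ' h1 h2
    refine (htail S ξ' h1).trans ?_
    have h3 : (∑' j : {j // j ∉ S}, ‖ξ₀ j‖ ^ 2) ≤ η / (4 * M) := hS.le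
    calc M * (2 * (∑' j : {j // j ∉ S}, ‖ξ₀ (j : J)‖ ^ 2) + 2 * ‖ξ' - ξ₀‖ ^ 2)
        ≤ M * (2 * (η / (4 * M)) + 2 * (η / (4 * M))) :=
          mul_le_mul_of_nonneg_left (by linarith) hM0.le
      _ = η := by field_simp; ring
  -- bound on the distance between the infinite and the finite product
  have hb : ∀ ξ' : lp (fun _ : J => EuclideanSpace ℝ (Fin k)) 2, ‖ξ' - ξ₀‖ ≤ 1 →
      (∑' j : {j // j ∉ S}, ‖f (ξ' j) - 1‖) ≤ η →
      dist (∏' j, f (ξ' j)) (∏ j ∈ S, f (ξ' j)) < ε / 3 := by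
    intro ξ' h1 h2
    have haux := aux_tprod_sub_prod (fun j => f (ξ' j) - 1) (hsummA ξ' h1) S
    have hone : ∀ x : ℂ, 1 + (x - 1) = x := fun x => by ring
    simp only [hone] at haux
    rw [dist_eq_norm]
    refine haux.trans_lt ?_
    have hτ0 : 0 ≤ ∑' j : {j // j ∉ S}, ‖f (ξ' j) - 1‖ := tsum_nonneg fun j => norm_nonneg _
    have hcle : Real.exp (∑' j, ‖f (ξ' j) - 1‖) ≤ c := Real.exp_le_exp.2 (hcB ξ' h1)
    have hge : 0 ≤ Real.exp (∑' j : {j // j ∉ S}, ‖f (ξ' j) - 1‖) - 1 := by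
      have := Real.one_le_exp hτ0
      linarith
    calc Real.exp (∑' j, ‖f (ξ' j) - 1‖)
          * (Real.exp (∑' j : {j // j ∉ S}, ‖f (ξ' j) - 1‖) - 1)
        ≤ c * (Real.exp (∑' j : {j // j ∉ S}, ‖f (ξ' j) - 1‖) - 1) :=
          mul_le_mul_of_nonneg_right hcle hge
      _ < ε / 3 := hkey _ hτ0 h2
  have hτξ : (∑' j : {j // j ∉ S}, ‖f (ξ j) - 1‖) ≤ η := hτ ξ hd1 hdsq
  have hτξ₀ : (∑' j : {j // j ∉ S}, ‖f (ξ₀ j) - 1‖) ≤ η := by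
    refine hτ ξ₀ (by simp) ?_
    have hz : ‖ξ₀ - ξ₀‖ ^ 2 = 0 := by simp
    rw [hz]
    exact (div_pos hηpos (by linarith)).le
  calc dist (∏' j, f (ξ j)) (∏' j, f (ξ₀ j))
      ≤ dist (∏' j, f (ξ j)) (∏ j ∈ S, f (ξ j))
        + dist (∏ j ∈ S, f (ξ j)) (∏ j ∈ S, f (ξ₀ j))
        + dist (∏ j ∈ S, f (ξ₀ j)) (∏' j, f (ξ₀ j)) := dist_triangle4 _ _ _ _
    _ < ε / 3 + ε / 3 + ε / 3 := by
        have b1 := hb ξ hd1 hτξ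
        have b2 := hδ₂ ξ hd2
        have b3 := hb ξ₀ (by simp) hτξ₀
        rw [dist_comm] at b3
        exact add_lt_add (add_lt_add b1 b2) b3
    _ = ε := by ring
end

section
/- Let ν be a Borel probability measure on ℝ^k and p > 2. If for every j ∈ {1,...,k} one has liminf_{t→0} |1 − ν̂(t e_j)| / |t|^p < ∞, then ν is the Dirac mass at 0. -/
open MeasureTheory Filter

-- per-coordinate lemma
theorem aux {k : ℕ} (ν : Measure (Fin k → ℝ)) [IsProbabilityMeasure ν]
    (p : ℝ) (hp : 2 < p) (j : Fin k) (C : ℝ)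
    (hC : ∃ᶠ t : ℝ in nhdsWithin 0 {0}ᶜ,
      ‖1 - ∫ x, Complex.exp (((2 * Real.pi * t * x j : ℝ) : ℂ) * Complex.I) ∂ν‖ / |t| ^ p ≤ C) :
    ∀ᵐ x ∂ν, x j = 0 := by
  have mj : Measurable fun x : Fin k → ℝ => x j := measurable_pi_apply j
  -- sequence extraction
  obtain ⟨t, ht_tendsto, ht⟩ :=
    Filter.exists_seq_forall_of_frequently (hC.and_eventually (eventually_mem_nhdsWithin))
  have htne : ∀ n, t n ≠ 0 := fun n => (ht n).2
  have ht0 : Tendsto t atTop (nhds 0) := ht_tendsto.mono_right nhdsWithin_le_nhds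
  -- integrability and identity for g s x = 1 - cos(2πsx)
  have hexp_int : ∀ s : ℝ, Integrable
      (fun x => Complex.exp (((2 * Real.pi * s * x j : ℝ) : ℂ) * Complex.I)) ν := by
    intro s
    have hm : Measurable fun x : Fin k → ℝ =>
        Complex.exp (((2 * Real.pi * s * x j : ℝ) : ℂ) * Complex.I) := by
      apply Complex.measurable_exp.comp
      exact (Complex.measurable_ofReal.comp ((measurable_const.mul mj))).mul measurable_const
    refine (integrable_const (1 : ℝ)).mono' hm.aestronglyMeasurable ?_
    filter_upwards with x
    rw [Complex.norm_exp_ofReal_mul_I]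
  have hg_int : ∀ s : ℝ, Integrable (fun x => 1 - Real.cos (2 * Real.pi * s * x j)) ν := by
    intro s
    have hm : Measurable fun x : Fin k → ℝ => 1 - Real.cos (2 * Real.pi * s * x j) :=
      measurable_const.sub (Real.measurable_cos.comp (measurable_const.mul mj))
    refine (integrable_const (2 : ℝ)).mono' hm.aestronglyMeasurable ?_
    filter_upwards with x
    have h1 := Real.neg_one_le_cos (2 * Real.pi * s * x j)
    have h2 := Real.cos_le_one (2 * Real.pi * s * x j)
    rw [Real.norm_eq_abs, abs_le]; constructor <;> linarith
  have hg_nonneg : ∀ s : ℝ, ∀ x : Fin k → ℝ, 0 ≤ 1 - Real.cos (2 * Real.pi * s * x j) := by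
    intro s x; have := Real.cos_le_one (2 * Real.pi * s * x j); linarith
  -- the real-part identity
  have hre : ∀ s : ℝ, ∫ x, (1 - Real.cos (2 * Real.pi * s * x j)) ∂ν =
      (1 - ∫ x, Complex.exp (((2 * Real.pi * s * x j : ℝ) : ℂ) * Complex.I) ∂ν).re := by
    intro s
    have hcos_int : Integrable (fun x => Real.cos (2 * Real.pi * s * x j)) ν := by
      have h2 := (integrable_const (1 : ℝ)).sub (hg_int s)
      have h3 : ((fun _ : Fin k → ℝ => (1:ℝ)) - fun x => 1 - Real.cos (2 * Real.pi * s * x j))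
          = fun x => Real.cos (2 * Real.pi * s * x j) := by funext x; simp
      rwa [h3] at h2
    have h1 : (∫ x, Complex.exp (((2 * Real.pi * s * x j : ℝ) : ℂ) * Complex.I) ∂ν).re
        = ∫ x, Real.cos (2 * Real.pi * s * x j) ∂ν := by
      rw [← RCLike.re_to_complex, ← integral_re (hexp_int s)]
      refine integral_congr_ae (Filter.Eventually.of_forall fun x => ?_)
      simp only [RCLike.re_to_complex, Complex.exp_ofReal_mul_I_re]
    rw [Complex.sub_re, Complex.one_re, h1, integral_sub (integrable_const 1) hcos_int]
    simp
  -- bound on the real integral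
  have hbound : ∀ n, ∫ x, (1 - Real.cos (2 * Real.pi * t n * x j)) ∂ν ≤ C * |t n| ^ p := by
    intro n
    rw [hre (t n)]
    have hpos : (0:ℝ) < |t n| ^ p := Real.rpow_pos_of_pos (abs_pos.mpr (htne n)) p
    have h2 : ‖1 - ∫ x, Complex.exp (((2 * Real.pi * t n * x j : ℝ) : ℂ) * Complex.I) ∂ν‖
        ≤ C * |t n| ^ p := (div_le_iff₀ hpos).mp (ht n).1
    refine le_trans ?_ h2
    exact le_trans (le_abs_self _) (Complex.abs_re_le_norm _)
  -- lintegral bound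
  have hlint : ∀ n, ∫⁻ x, ENNReal.ofReal (1 - Real.cos (2 * Real.pi * t n * x j)) ∂ν
      ≤ ENNReal.ofReal (C * |t n| ^ p) := by
    intro n
    rw [← ofReal_integral_eq_lintegral_ofReal (hg_int (t n))
      (Filter.Eventually.of_forall (hg_nonneg (t n)))]
    exact ENNReal.ofReal_le_ofReal (hbound n)
  -- pointwise identity for the rescaled functions
  have hFeq : ∀ n, ∀ x : Fin k → ℝ,
      ENNReal.ofReal ((Real.sin (Real.pi * t n * x j) / t n) ^ 2)
      = ENNReal.ofReal (1 - Real.cos (2 * Real.pi * t n * x j)) / ENNReal.ofReal (2 * t n ^ 2) := by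
    intro n x
    have htn := htne n
    have h2t : (0:ℝ) < 2 * t n ^ 2 := by positivity
    rw [← ENNReal.ofReal_div_of_pos h2t]
    congr 1
    have hsc := Real.sin_sq_add_cos_sq (Real.pi * t n * x j)
    have hcos2 : Real.cos (2 * Real.pi * t n * x j) = Real.cos (2 * (Real.pi * t n * x j)) := by
      ring_nf
    rw [hcos2, Real.cos_two_mul]
    field_simp
    linear_combination 2 * hsc
  have hFmeas : ∀ n, Measurable (fun x : Fin k → ℝ =>
      ENNReal.ofReal ((Real.sin (Real.pi * t n * x j) / t n) ^ 2)) := by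
    intro n
    apply ENNReal.measurable_ofReal.comp
    exact ((Real.measurable_sin.comp (measurable_const.mul mj)).div_const _).pow_const 2
  -- lintegral bound on the rescaled functions
  have hFlint : ∀ n, ∫⁻ x, ENNReal.ofReal ((Real.sin (Real.pi * t n * x j) / t n) ^ 2) ∂ν
      ≤ ENNReal.ofReal (C * |t n| ^ (p - 2) / 2) := by
    intro n
    have htn := htne n
    have h2t : (0:ℝ) < 2 * t n ^ 2 := by positivity
    have hne : (ENNReal.ofReal (2 * t n ^ 2))⁻¹ ≠ ⊤ :=
      ENNReal.inv_ne_top.mpr (ENNReal.ofReal_pos.mpr h2t).ne'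
    have hmg : Measurable (fun x : Fin k → ℝ =>
        ENNReal.ofReal (1 - Real.cos (2 * Real.pi * t n * x j))) := by
      apply ENNReal.measurable_ofReal.comp
      exact measurable_const.sub (Real.measurable_cos.comp (measurable_const.mul mj))
    calc ∫⁻ x, ENNReal.ofReal ((Real.sin (Real.pi * t n * x j) / t n) ^ 2) ∂ν
        = ∫⁻ x, ENNReal.ofReal (1 - Real.cos (2 * Real.pi * t n * x j))
            * (ENNReal.ofReal (2 * t n ^ 2))⁻¹ ∂ν := by
          refine lintegral_congr fun x => ?_
          rw [hFeq n x, div_eq_mul_inv]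
      _ = (∫⁻ x, ENNReal.ofReal (1 - Real.cos (2 * Real.pi * t n * x j)) ∂ν)
            * (ENNReal.ofReal (2 * t n ^ 2))⁻¹ := lintegral_mul_const' _ _ hne
      _ ≤ ENNReal.ofReal (C * |t n| ^ p) * (ENNReal.ofReal (2 * t n ^ 2))⁻¹ := by
          gcongr
          exact hlint n
      _ = ENNReal.ofReal (C * |t n| ^ p / (2 * t n ^ 2)) := by
          rw [ENNReal.ofReal_div_of_pos h2t, div_eq_mul_inv]
      _ = ENNReal.ofReal (C * |t n| ^ (p - 2) / 2) := by
          congr 1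
          have habs : (0:ℝ) < |t n| := abs_pos.mpr (htne n)
          have hsplit : |t n| ^ p = |t n| ^ (p - 2) * |t n| ^ (2:ℝ) := by
            rw [← Real.rpow_add habs]; ring_nf
          have h2' : |t n| ^ (2:ℝ) = t n ^ 2 := by
            rw [show ((2:ℝ)) = ((2:ℕ):ℝ) by norm_num, Real.rpow_natCast, sq_abs]
          rw [hsplit, h2']
          field_simp
  -- the bound tends to 0
  have hb0 : Tendsto (fun n => ENNReal.ofReal (C * |t n| ^ (p - 2) / 2)) atTop (nhds 0) := by
    have h1 : Tendsto (fun n => |t n|) atTop (nhds 0) := by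
      have := ht0.abs
      simpa using this
    have h2 : Tendsto (fun n => |t n| ^ (p - 2)) atTop (nhds 0) := by
      have hc : ContinuousAt (fun x : ℝ => x ^ (p - 2)) 0 :=
        Real.continuousAt_rpow_const 0 (p - 2) (Or.inr (by linarith))
      have := hc.tendsto.comp h1
      simpa [Function.comp_def, Real.zero_rpow (by linarith : p - 2 ≠ 0)] using this
    have h3 : Tendsto (fun n => C * |t n| ^ (p - 2) / 2) atTop (nhds 0) := by
      have := (h2.const_mul C).div_const 2
      simpa using this
    have := (ENNReal.continuous_ofReal.tendsto 0).comp h3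
    simpa [Function.comp_def] using this
  -- liminf of the lintegrals is 0
  have hliminf : liminf (fun n => ∫⁻ x, ENNReal.ofReal
      ((Real.sin (Real.pi * t n * x j) / t n) ^ 2) ∂ν) atTop = 0 := by
    have hle := liminf_le_liminf (f := (atTop : Filter ℕ)) (Filter.Eventually.of_forall hFlint)
    rw [hb0.liminf_eq] at hle
    exact le_antisymm hle zero_le
  -- pointwise limit
  have hpt : ∀ x : Fin k → ℝ, Tendsto (fun n => (Real.sin (Real.pi * t n * x j) / t n) ^ 2)
      atTop (nhds ((Real.pi * x j) ^ 2)) := by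
    intro x
    have hd : HasDerivAt (fun s : ℝ => Real.sin (Real.pi * s * x j)) (Real.pi * x j) 0 := by
      have h1 : HasDerivAt (fun s : ℝ => Real.pi * s * x j) (Real.pi * x j) 0 := by
        simpa using ((hasDerivAt_id (0:ℝ)).const_mul Real.pi).mul_const (x j)
      have h2 := (Real.hasDerivAt_sin (Real.pi * 0 * x j)).comp 0 h1
      simpa [Function.comp_def] using h2
    have hs := hasDerivAt_iff_tendsto_slope.mp hd
    have h3 : Tendsto (fun s : ℝ => Real.sin (Real.pi * s * x j) / s)
        (nhdsWithin 0 {0}ᶜ) (nhds (Real.pi * x j)) := by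
      refine hs.congr fun s => ?_
      rw [slope_def_field]
      simp
    exact (h3.comp ht_tendsto).pow 2
  have hlim_pt : ∀ x : Fin k → ℝ, liminf (fun n => ENNReal.ofReal
      ((Real.sin (Real.pi * t n * x j) / t n) ^ 2)) atTop
      = ENNReal.ofReal ((Real.pi * x j) ^ 2) := fun x =>
    ((ENNReal.continuous_ofReal.tendsto _).comp (hpt x)).liminf_eq
  -- Fatou
  have hzero : ∫⁻ x, ENNReal.ofReal ((Real.pi * x j) ^ 2) ∂ν = 0 := by
    have hF := lintegral_liminf_le (μ := ν) (u := atTop) hFmeas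
    rw [hliminf] at hF
    have hle : ∫⁻ x, ENNReal.ofReal ((Real.pi * x j) ^ 2) ∂ν ≤ 0 :=
      le_trans (le_of_eq (lintegral_congr fun x => (hlim_pt x).symm)) hF
    exact le_antisymm hle zero_le
  have hmeas2 : Measurable fun x : Fin k → ℝ => ENNReal.ofReal ((Real.pi * x j) ^ 2) :=
    ENNReal.measurable_ofReal.comp ((measurable_const.mul mj).pow_const 2)
  filter_upwards [(lintegral_eq_zero_iff hmeas2).mp hzero] with x hx
  simp only [Pi.zero_apply, ENNReal.ofReal_eq_zero] at hx
  have hpx : Real.pi * x j = 0 := by nlinarith [sq_nonneg (Real.pi * x j)]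
  rcases mul_eq_zero.mp hpx with h' | h'
  · exact absurd h' Real.pi_ne_zero
  · exact h'

/-- Let `ν` be a Borel probability measure on `ℝ^k` and `p > 2`.  If for every coordinate
`j` one has `liminf_{t→0} |1 - ν̂(t e_j)|/|t|^p < ∞` (i.e. the ratio is frequently bounded
as `t → 0`), then `ν` is the Dirac mass at `0`. -/
theorem stmt8 {k : ℕ} (ν : Measure (Fin k → ℝ)) [IsProbabilityMeasure ν]
    (p : ℝ) (hp : 2 < p)
    (h : ∀ j : Fin k, ∃ C : ℝ, ∃ᶠ t : ℝ in nhdsWithin 0 {0}ᶜ,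
      ‖1 - ∫ x, Complex.exp (((2 * Real.pi * t * x j : ℝ) : ℂ) * Complex.I) ∂ν‖ / |t| ^ p ≤ C) :
    ν = Measure.dirac (0 : Fin k → ℝ) := by
  have key : ∀ᵐ x ∂ν, x = 0 := by
    have h1 : ∀ j : Fin k, ∀ᵐ x ∂ν, x j = 0 := by
      intro j
      obtain ⟨C, hC⟩ := h j
      exact aux ν p hp j C hC
    filter_upwards [ae_all_iff.mpr h1] with x hx
    funext j; exact hx j
  calc ν = ν.map id := (Measure.map_id).symm
    _ = ν.map (fun _ => (0 : Fin k → ℝ)) :=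
        Measure.map_congr (key.mono fun x hx => by simp [hx])
    _ = Measure.dirac 0 := by
        rw [Measure.map_const]
        simp
end

section
/- Let H be a Hilbert space, T : H → H a bounded injective operator, and α ∈ H with α ∉ ran(T). Suppose (S_n) is a sequence of bounded operators with sup_n ‖S_n T‖ < ∞ and ‖T S_n α − α‖ → 0 hold, where moreover for every ζ ∈ H one has T S_n ζ → ζ weakly only along subsequences where S_n ζ is bounded. If liminf_n ‖S_n α‖ < ∞, then α ∈ ran(T). Equivalently: if α ∉ ran(T) then ‖S_n α‖ → ∞. -/
open Filter

/-- Let `T` be a bounded injective operator on a Hilbert space `H` and `(S n)` a sequence of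
bounded operators with `sup_n ‖S n ∘ T‖ < ∞` and `‖T (S n ζ) − ζ‖ → 0` for every `ζ`.
If `α ∉ ran T`, then `‖S n α‖ → ∞` (equivalently, if `liminf ‖S n α‖ < ∞` then
`α ∈ ran T`). -/
theorem stmt13 {H : Type*} [NormedAddCommGroup H] [InnerProductSpace ℂ H] [CompleteSpace H]
    (T : H →L[ℂ] H) (hTinj : Function.Injective T)
    (S : ℕ → H →L[ℂ] H)
    (hbd : ∃ C : ℝ, ∀ n, ‖S n ∘L T‖ ≤ C)
    (happrox : ∀ ζ : H, Tendsto (fun n => T (S n ζ)) atTop (nhds ζ))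
    (α : H) (hα : α ∉ LinearMap.range (T : H →ₗ[ℂ] H)) :
    Tendsto (fun n => ‖S n α‖) atTop atTop := by
  classical
  by_contra hcon
  rw [tendsto_atTop] at hcon
  push_neg at hcon
  obtain ⟨b, hb⟩ := hcon
  -- the filter of indices along which `‖S n α‖` stays below `b`
  set F : Filter ℕ := atTop ⊓ Filter.principal {n | ‖S n α‖ < b} with hFdef
  have hF : F.NeBot := Filter.frequently_iff_neBot.mp ((Filter.not_eventually.mp hb).mono fun n hn => not_not.mp hn)
  set β : ℕ → H := fun n => S n α with hβdef
  -- view `β n` as elements of the weak dual via the Riesz isomorphism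
  let g : ℕ → WeakDual ℂ H := fun n => (InnerProductSpace.toDual ℂ H (β n) : StrongDual ℂ H)
  have hmem : Tendsto g F (Filter.principal
      (WeakDual.toStrongDual ⁻¹' Metric.closedBall (0 : StrongDual ℂ H) b)) := by
    rw [Filter.tendsto_principal]
    have hle : F ≤ Filter.principal {n | ‖S n α‖ < b} := inf_le_right
    filter_upwards [hle (Filter.mem_principal_self _)] with n hn
    simp only [Set.mem_preimage, Metric.mem_closedBall, dist_zero_right]
    have : ‖(WeakDual.toStrongDual (g n) : StrongDual ℂ H)‖ = ‖β n‖ :=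
      (InnerProductSpace.toDual ℂ H).norm_map (β n)
    rw [this]
    exact le_of_lt hn
  -- Banach-Alaoglu: extract a weak-* cluster point
  obtain ⟨y, -, hcl⟩ := WeakDual.isCompact_closedBall (𝕜 := ℂ) (E := H) 0 b
    (f := Filter.map g F) hmem
  set ζ : H := (InnerProductSpace.toDual ℂ H).symm (WeakDual.toStrongDual y) with hζdef
  have hyx : ∀ x : H, y x = inner ℂ ζ x := by
    intro x
    have : InnerProductSpace.toDual ℂ H ζ = WeakDual.toStrongDual y := by
      simp [hζdef]
    rw [← InnerProductSpace.toDual_apply_apply (𝕜 := ℂ) (E := H) (x := ζ) (y := x), this]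
    rfl
  -- for every `x`, `⟪T ζ, x⟫ = ⟪α, x⟫`
  have key : ∀ x : H, (inner ℂ (T ζ) x : ℂ) = inner ℂ α x := by
    intro x
    set x' : H := ContinuousLinearMap.adjoint T x with hx'def
    -- evaluation at `x'` is weak-* continuous, so cluster points are preserved
    have hevcl : ClusterPt (y x') (Filter.map (fun n => (g n : WeakDual ℂ H) x') F) :=
      hcl.map ((WeakDual.eval_continuous x').continuousAt) Filter.tendsto_map
    have hgx : (fun n => (g n : WeakDual ℂ H) x') = fun n => (inner ℂ (β n) x' : ℂ) := by
      funext n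
      exact InnerProductSpace.toDual_apply_apply
    rw [hgx] at hevcl
    have hinner : (fun n => (inner ℂ (β n) x' : ℂ)) = fun n => inner ℂ (T (β n)) x := by
      funext n
      rw [hx'def, ContinuousLinearMap.adjoint_inner_right]
    rw [hinner] at hevcl
    -- but this sequence converges to `⟪α, x⟫` along `F`
    have htend : Tendsto (fun n => (inner ℂ (T (β n)) x : ℂ)) F (nhds (inner ℂ α x)) := by
      have h1 : Tendsto (fun n => T (β n)) atTop (nhds α) := happrox α
      have h2 : Tendsto (fun n => (inner ℂ (T (β n)) x : ℂ)) atTop (nhds (inner ℂ α x)) :=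
        (Continuous.inner continuous_id continuous_const).continuousAt.tendsto.comp h1
          |>.congr (fun n => rfl)
      exact h2.mono_left inf_le_left
    have heq : y x' = inner ℂ α x := by
      have : ClusterPt (y x') (nhds (inner ℂ α x : ℂ)) := hevcl.mono htend
      exact eq_of_nhds_neBot this
    rw [← heq, hyx x', hx'def, ContinuousLinearMap.adjoint_inner_right]
  have : T ζ = α := ext_inner_right ℂ key
  exact hα ⟨ζ, this⟩
end
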